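/- Let Ω ⊆ ℝⁿ be open and r : Ω → (0,∞) smooth such that ∂_j r is bounded for each j and all iterated weighted derivatives (r∂)^β(∂_j r) are bounded. Then for every first-order operator of the form P = Σ_j a_j·(r∂_j) + a₀ with coefficients a_j having all weighted derivatives bounded, P maps K^{k}_a(Ω) continuously into K^{k−1}_a(Ω) for every k ≥ 1 and a ∈ ℝ, where K^m_a(Ω) := { u : r^{−a}·Q u ∈ L²(Ω) for all weighted differential operators Q of order ≤ m }; in particular the weight exponent a is unchanged under application of weighted (degenerate) first-order operators. -/

import Mathlib

open MeasureTheory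

variable {n : ℕ}

/-- Partial derivative in the `j`-th coordinate direction on `ℝⁿ`. -/
noncomputable def pd (j : Fin n) (u : (Fin n → ℝ) → ℝ) : (Fin n → ℝ) → ℝ :=
  fun x => fderiv ℝ u x (Pi.single j 1)

/-- The weighted derivative `(r∂_j) u = r · ∂_j u`. -/
noncomputable def wd (r : (Fin n → ℝ) → ℝ) (j : Fin n) (u : (Fin n → ℝ) → ℝ) :
    (Fin n → ℝ) → ℝ :=
  fun x => r x * pd j u x

/-- Iterated weighted derivatives `(r∂)^α`. -/
noncomputable def wdList (r : (Fin n → ℝ) → ℝ) (L : List (Fin n))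
    (u : (Fin n → ℝ) → ℝ) : (Fin n → ℝ) → ℝ :=
  L.foldr (wd r) u

/-- Membership in `K^m_a(Ω) = { u : r^{−a} Q u ∈ L²(Ω) for all weighted operators `Q`
of order `≤ m` }`, via the generating monomials `(r∂)^α`. -/
def Kmem (Ω : Set (Fin n → ℝ)) (r : (Fin n → ℝ) → ℝ) (m : ℕ) (a : ℝ)
    (u : (Fin n → ℝ) → ℝ) : Prop :=
  ∀ L : List (Fin n), L.length ≤ m →
    MemLp (fun x => r x ^ (-a) * wdList r L u x) 2 (volume.restrict Ω)

/-- The sup-of-`L²`-norms norm on `K^m_a(Ω)`. -/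
noncomputable def Knorm (Ω : Set (Fin n → ℝ)) (r : (Fin n → ℝ) → ℝ) (m : ℕ) (a : ℝ)
    (u : (Fin n → ℝ) → ℝ) : ENNReal :=
  ⨆ L : {L : List (Fin n) // L.length ≤ m},
    eLpNorm (fun x => r x ^ (-a) * wdList r L u x) 2 (volume.restrict Ω)

section Aux

variable {Ω : Set (Fin n → ℝ)} {r u f g : (Fin n → ℝ) → ℝ}

lemma wdList_nil : wdList r [] u = u := rfl

lemma wdList_cons (j : Fin n) (L : List (Fin n)) : wdList r (j :: L) u = wd r j (wdList r L u) := rfl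

lemma wdList_append (L : List (Fin n)) (j : Fin n) :
    wdList r (L ++ [j]) f = wdList r L (wd r j f) := by
  simp [wdList, List.foldr_append]

lemma pd_congr_of_isOpen (hΩ : IsOpen Ω) (h : ∀ y ∈ Ω, f y = g y) {x : Fin n → ℝ}
    (hx : x ∈ Ω) (j : Fin n) : pd j f x = pd j g x := by
  have he : f =ᶠ[nhds x] g := Filter.eventually_of_mem (hΩ.mem_nhds hx) h
  simp only [pd, he.fderiv_eq]

lemma diffAt_of_contDiffOn (hΩ : IsOpen Ω) (hf : ContDiffOn ℝ (⊤ : ℕ∞) f Ω) {x : Fin n → ℝ}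
    (hx : x ∈ Ω) : DifferentiableAt ℝ f x :=
  (hf.differentiableOn (by simp)).differentiableAt (hΩ.mem_nhds hx)

lemma contDiffOn_pd (hΩ : IsOpen Ω) (hf : ContDiffOn ℝ (⊤ : ℕ∞) f Ω) (j : Fin n) :
    ContDiffOn ℝ (⊤ : ℕ∞) (pd j f) Ω := by
  have h1 : ContDiffOn ℝ (⊤ : ℕ∞) (fun x => fderivWithin ℝ f Ω x) Ω :=
    hf.fderivWithin hΩ.uniqueDiffOn (by simp)
  have h2 : ContDiffOn ℝ (⊤ : ℕ∞) (fun x => fderivWithin ℝ f Ω x (Pi.single j 1)) Ω :=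
    h1.clm_apply contDiffOn_const
  exact h2.congr fun x hx => by simp [pd, fderivWithin_of_isOpen hΩ hx]

lemma contDiffOn_wd (hΩ : IsOpen Ω) (hr : ContDiffOn ℝ (⊤ : ℕ∞) r Ω) (hf : ContDiffOn ℝ (⊤ : ℕ∞) f Ω)
    (j : Fin n) : ContDiffOn ℝ (⊤ : ℕ∞) (wd r j f) Ω :=
  hr.mul (contDiffOn_pd hΩ hf j)

lemma contDiffOn_wdList (hΩ : IsOpen Ω) (hr : ContDiffOn ℝ (⊤ : ℕ∞) r Ω) (hu : ContDiffOn ℝ (⊤ : ℕ∞) u Ω) :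
    ∀ L : List (Fin n), ContDiffOn ℝ (⊤ : ℕ∞) (wdList r L u) Ω
  | [] => hu
  | j :: L => contDiffOn_wd hΩ hr (contDiffOn_wdList hΩ hr hu L) j

lemma pd_add {x : Fin n → ℝ} (hf : DifferentiableAt ℝ f x) (hg : DifferentiableAt ℝ g x)
    (j : Fin n) : pd j (fun y => f y + g y) x = pd j f x + pd j g x := by
  simp [pd, fderiv_fun_add hf hg]

lemma pd_mul {x : Fin n → ℝ} (hf : DifferentiableAt ℝ f x) (hg : DifferentiableAt ℝ g x)
    (j : Fin n) : pd j (fun y => f y * g y) x = f x * pd j g x + g x * pd j f x := by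
  simp [pd, fderiv_fun_mul hf hg, smul_eq_mul]

lemma pd_zero {x : Fin n → ℝ} (j : Fin n) : pd j (fun _ => (0:ℝ)) x = 0 := by
  simp [pd]


abbrev WPair (n : ℕ) := (((Fin n → ℝ) → ℝ) × List (Fin n))

noncomputable def evalD (r : (Fin n → ℝ) → ℝ) (D : List (WPair n))
    (u : (Fin n → ℝ) → ℝ) : (Fin n → ℝ) → ℝ :=
  fun x => (D.map fun p => p.1 x * wdList r p.2 u x).sum

noncomputable def stepD (r : (Fin n → ℝ) → ℝ) (j : Fin n) (D : List (WPair n)) :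
    List (WPair n) :=
  D.flatMap fun p => [(wd r j p.1, p.2), (p.1, j :: p.2)]

lemma evalD_cons (p : WPair n) (D : List (WPair n)) (x : Fin n → ℝ) :
    evalD r (p :: D) u x = p.1 x * wdList r p.2 u x + evalD r D u x := by
  simp [evalD]

lemma stepD_cons (j : Fin n) (p : WPair n) (D : List (WPair n)) :
    stepD r j (p :: D) = (wd r j p.1, p.2) :: (p.1, j :: p.2) :: stepD r j D := by
  simp [stepD]

lemma mem_stepD {j : Fin n} {q : WPair n} {D : List (WPair n)} (hq : q ∈ stepD r j D) :
    ∃ p ∈ D, q = (wd r j p.1, p.2) ∨ q = (p.1, j :: p.2) := by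
  simp only [stepD, List.mem_flatMap, List.mem_cons, List.mem_singleton] at hq
  obtain ⟨p, hp, h⟩ := hq
  exact ⟨p, hp, by simpa using h⟩

lemma differentiableAt_evalD (hΩ : IsOpen Ω) (hr : ContDiffOn ℝ (⊤ : ℕ∞) r Ω)
    (hu : ContDiffOn ℝ (⊤ : ℕ∞) u Ω) {x : Fin n → ℝ} (hx : x ∈ Ω) :
    ∀ D : List (WPair n), (∀ p ∈ D, ContDiffOn ℝ (⊤ : ℕ∞) p.1 Ω) →
      DifferentiableAt ℝ (evalD r D u) x
  | [], _ => by
      have : evalD r ([] : List (WPair n)) u = fun _ => (0:ℝ) := rfl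
      rw [this]; exact differentiableAt_const 0
  | p :: D, hD => by
      have h1 : DifferentiableAt ℝ (fun y => p.1 y * wdList r p.2 u y) x :=
        (diffAt_of_contDiffOn hΩ (hD p (List.mem_cons_self)) hx).mul
          (diffAt_of_contDiffOn hΩ (contDiffOn_wdList hΩ hr hu p.2) hx)
      have h2 := differentiableAt_evalD hΩ hr hu hx D
        (fun q hq => hD q (List.mem_cons_of_mem _ hq))
      have : evalD r (p :: D) u = fun y => p.1 y * wdList r p.2 u y + evalD r D u y := by
        funext y; rw [evalD_cons]
      rw [this]; exact h1.add h2

lemma wd_evalD (hΩ : IsOpen Ω) (hr : ContDiffOn ℝ (⊤ : ℕ∞) r Ω)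
    (hu : ContDiffOn ℝ (⊤ : ℕ∞) u Ω) {x : Fin n → ℝ} (hx : x ∈ Ω) (j : Fin n) :
    ∀ D : List (WPair n), (∀ p ∈ D, ContDiffOn ℝ (⊤ : ℕ∞) p.1 Ω) →
      wd r j (evalD r D u) x = evalD r (stepD r j D) u x
  | [], _ => by
      have h0 : evalD r ([] : List (WPair n)) u = fun _ => (0:ℝ) := rfl
      have h1 : stepD r j ([] : List (WPair n)) = [] := rfl
      rw [h0, h1]
      show r x * pd j (fun _ => (0:ℝ)) x = 0
      rw [pd_zero]; ring
  | p :: D, hD => by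
      have hb := diffAt_of_contDiffOn hΩ (hD p (List.mem_cons_self)) hx
      have hv := diffAt_of_contDiffOn hΩ (contDiffOn_wdList hΩ hr hu p.2) hx
      have hDtail : ∀ q ∈ D, ContDiffOn ℝ (⊤ : ℕ∞) q.1 Ω :=
        fun q hq => hD q (List.mem_cons_of_mem _ hq)
      have h2 := differentiableAt_evalD hΩ hr hu hx D hDtail
      have ih := wd_evalD hΩ hr hu hx j D hDtail
      have hfun : evalD r (p :: D) u = fun y => p.1 y * wdList r p.2 u y + evalD r D u y := by
        funext y; rw [evalD_cons]
      show r x * pd j (evalD r (p :: D) u) x = _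
      rw [hfun, stepD_cons, evalD_cons, evalD_cons,
        pd_add (f := fun y => p.1 y * wdList r p.2 u y) (hb.mul hv) h2, pd_mul hb hv]
      have hwd : wdList r (j :: p.2) u x = r x * pd j (wdList r p.2 u) x := rfl
      have hij : evalD r (stepD r j D) u x = r x * pd j (evalD r D u) x := ih.symm
      rw [hwd, hij]
      show r x * (p.1 x * pd j (wdList r p.2 u) x + wdList r p.2 u x * pd j p.1 x
          + pd j (evalD r D u) x)
        = (r x * pd j p.1 x) * wdList r p.2 u x
          + (p.1 x * (r x * pd j (wdList r p.2 u) x) + r x * pd j (evalD r D u) x)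
      ring

noncomputable def rep0 (aj : Fin n → (Fin n → ℝ) → ℝ) (a₀ : (Fin n → ℝ) → ℝ) :
    List (WPair n) :=
  (List.ofFn fun j => ((aj j, [j]) : WPair n)) ++ [(a₀, ([] : List (Fin n)))]

noncomputable def rep (r : (Fin n → ℝ) → ℝ) (aj : Fin n → (Fin n → ℝ) → ℝ)
    (a₀ : (Fin n → ℝ) → ℝ) (L : List (Fin n)) : List (WPair n) :=
  L.foldr (stepD r) (rep0 aj a₀)

section Rep
variable {aj : Fin n → (Fin n → ℝ) → ℝ} {a₀ : (Fin n → ℝ) → ℝ}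

/-- Good coefficient class: smooth on `Ω` with all weighted derivatives bounded. -/
def GoodC (Ω : Set (Fin n → ℝ)) (r b : (Fin n → ℝ) → ℝ) : Prop :=
  ContDiffOn ℝ (⊤ : ℕ∞) b Ω ∧ ∀ L : List (Fin n), ∃ M : ℝ, ∀ x ∈ Ω, |wdList r L b x| ≤ M

lemma GoodC.wd (hΩ : IsOpen Ω) (hr : ContDiffOn ℝ (⊤ : ℕ∞) r Ω) {b : (Fin n → ℝ) → ℝ}
    (hb : GoodC Ω r b) (j : Fin n) : GoodC Ω r (wd r j b) := by
  refine ⟨contDiffOn_wd hΩ hr hb.1 j, fun L => ?_⟩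
  obtain ⟨M, hM⟩ := hb.2 (L ++ [j])
  exact ⟨M, fun x hx => by rw [← wdList_append]; exact hM x hx⟩

lemma rep_props (hΩ : IsOpen Ω) (hr : ContDiffOn ℝ (⊤ : ℕ∞) r Ω)
    (hajsmooth : ∀ j, ContDiffOn ℝ (⊤ : ℕ∞) (aj j) Ω) (ha₀smooth : ContDiffOn ℝ (⊤ : ℕ∞) a₀ Ω)
    (hajbd : ∀ (L : List (Fin n)) (j : Fin n), ∃ M : ℝ, ∀ x ∈ Ω, |wdList r L (aj j) x| ≤ M)
    (ha₀bd : ∀ L : List (Fin n), ∃ M : ℝ, ∀ x ∈ Ω, |wdList r L a₀ x| ≤ M) :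
    ∀ L : List (Fin n), ∀ p ∈ rep r aj a₀ L,
      GoodC Ω r p.1 ∧ p.2.length ≤ L.length + 1
  | [], p, hp => by
      simp only [rep, List.foldr_nil, rep0, List.mem_append, List.mem_ofFn,
        List.mem_singleton] at hp
      rcases hp with ⟨j, rfl⟩ | rfl
      · exact ⟨⟨hajsmooth j, fun L => hajbd L j⟩, by simp⟩
      · exact ⟨⟨ha₀smooth, ha₀bd⟩, by simp⟩
  | j :: L, p, hp => by
      have hp' : p ∈ stepD r j (rep r aj a₀ L) := hp
      obtain ⟨q, hq, hcase⟩ := mem_stepD hp'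
      obtain ⟨hqg, hqlen⟩ := rep_props hΩ hr hajsmooth ha₀smooth hajbd ha₀bd L q hq
      rcases hcase with rfl | rfl
      · exact ⟨hqg.wd hΩ hr j, by simpa using Nat.le_succ_of_le hqlen⟩
      · exact ⟨hqg, by simpa using Nat.succ_le_succ hqlen⟩

lemma rep_smooth (hΩ : IsOpen Ω) (hr : ContDiffOn ℝ (⊤ : ℕ∞) r Ω)
    (hajsmooth : ∀ j, ContDiffOn ℝ (⊤ : ℕ∞) (aj j) Ω) (ha₀smooth : ContDiffOn ℝ (⊤ : ℕ∞) a₀ Ω)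
    (hajbd : ∀ (L : List (Fin n)) (j : Fin n), ∃ M : ℝ, ∀ x ∈ Ω, |wdList r L (aj j) x| ≤ M)
    (ha₀bd : ∀ L : List (Fin n), ∃ M : ℝ, ∀ x ∈ Ω, |wdList r L a₀ x| ≤ M)
    (L : List (Fin n)) : ∀ p ∈ rep r aj a₀ L, ContDiffOn ℝ (⊤ : ℕ∞) p.1 Ω :=
  fun p hp => ((rep_props hΩ hr hajsmooth ha₀smooth hajbd ha₀bd L p hp).1).1

lemma rep_eval (hΩ : IsOpen Ω) (hr : ContDiffOn ℝ (⊤ : ℕ∞) r Ω)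
    (hajsmooth : ∀ j, ContDiffOn ℝ (⊤ : ℕ∞) (aj j) Ω) (ha₀smooth : ContDiffOn ℝ (⊤ : ℕ∞) a₀ Ω)
    (hajbd : ∀ (L : List (Fin n)) (j : Fin n), ∃ M : ℝ, ∀ x ∈ Ω, |wdList r L (aj j) x| ≤ M)
    (ha₀bd : ∀ L : List (Fin n), ∃ M : ℝ, ∀ x ∈ Ω, |wdList r L a₀ x| ≤ M)
    (hu : ContDiffOn ℝ (⊤ : ℕ∞) u Ω) :
    ∀ L : List (Fin n), ∀ x ∈ Ω,
      wdList r L (fun x => (∑ j, aj j x * (r x * pd j u x)) + a₀ x * u x) x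
        = evalD r (rep r aj a₀ L) u x
  | [], x, hx => by
      show (∑ j, aj j x * (r x * pd j u x)) + a₀ x * u x = _
      simp only [rep, List.foldr_nil, rep0, evalD, List.map_append, List.map_ofFn,
        List.sum_append, List.map_cons, List.map_nil, List.sum_cons, List.sum_nil]
      rw [List.sum_ofFn]
      simp only [Function.comp]
      have : ∀ j : Fin n, wdList r [j] u x = r x * pd j u x := fun j => rfl
      simp only [this, wdList_nil]
      ring
  | j :: L, x, hx => by
      have ih := rep_eval hΩ hr hajsmooth ha₀smooth hajbd ha₀bd hu L
      have hsm := rep_smooth hΩ hr hajsmooth ha₀smooth hajbd ha₀bd L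
      show r x * pd j (wdList r L _) x = _
      rw [pd_congr_of_isOpen hΩ (fun y hy => ih y hy) hx j]
      exact wd_evalD hΩ hr hu hx j (rep r aj a₀ L) hsm
end Rep

open Classical in
/-- A uniform bound for `|f|` on `Ω`, if one exists. -/
noncomputable def Mb (Ω : Set (Fin n → ℝ)) (f : (Fin n → ℝ) → ℝ) : ℝ :=
  if h : ∃ M : ℝ, ∀ x ∈ Ω, |f x| ≤ M then h.choose else 0

lemma Mb_spec {Ω : Set (Fin n → ℝ)} {f : (Fin n → ℝ) → ℝ}
    (h : ∃ M : ℝ, ∀ x ∈ Ω, |f x| ≤ M) : ∀ x ∈ Ω, |f x| ≤ Mb Ω f := by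
  classical
  rw [Mb, dif_pos h]; exact h.choose_spec

noncomputable def CD (Ω : Set (Fin n → ℝ)) (D : List (WPair n)) : ENNReal :=
  (D.map fun p => ENNReal.ofReal (Mb Ω p.1)).sum

lemma CD_ne_top (Ω : Set (Fin n → ℝ)) : ∀ D : List (WPair n), CD Ω D ≠ ⊤
  | [] => by simp [CD]
  | p :: D => by
      have := CD_ne_top Ω D
      simp only [CD, List.map_cons, List.sum_cons] at *
      exact ENNReal.add_ne_top.mpr ⟨ENNReal.ofReal_ne_top, this⟩

lemma CD_cons (Ω : Set (Fin n → ℝ)) (p : WPair n) (D : List (WPair n)) :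
    CD Ω (p :: D) = ENNReal.ofReal (Mb Ω p.1) + CD Ω D := by
  simp [CD]

section Core
variable {Ω : Set (Fin n → ℝ)} {r u : (Fin n → ℝ) → ℝ}

lemma core_estimate (hΩ : IsOpen Ω) (hr : ContDiffOn ℝ (⊤ : ℕ∞) r Ω)
    (hrpos : ∀ x ∈ Ω, 0 < r x) (hu : ContDiffOn ℝ (⊤ : ℕ∞) u Ω) (k : ℕ) (a : ℝ)
    (hK : ∀ L : List (Fin n), L.length ≤ k →
      MemLp (fun x => r x ^ (-a) * wdList r L u x) 2 (volume.restrict Ω)) :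
    ∀ D : List (WPair n),
      (∀ p ∈ D, GoodC Ω r p.1 ∧ p.2.length ≤ k) →
      MemLp (fun x => r x ^ (-a) * evalD r D u x) 2 (volume.restrict Ω) ∧
      eLpNorm (fun x => r x ^ (-a) * evalD r D u x) 2 (volume.restrict Ω)
        ≤ CD Ω D * Knorm Ω r k a u
  | [], _ => by
      have h0 : (fun x => r x ^ (-a) * evalD r ([] : List (WPair n)) u x)
          = fun _ => (0:ℝ) := by
        funext x; show r x ^ (-a) * 0 = 0; ring
      rw [h0]
      constructor
      · exact MemLp.zero'
      · simp [CD, eLpNorm_zero']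
  | p :: D, hD => by
      obtain ⟨⟨hps, hpb⟩, hplen⟩ := hD p (List.mem_cons_self)
      have hDtail := fun q hq => hD q (List.mem_cons_of_mem _ hq)
      obtain ⟨ihm, ihn⟩ := core_estimate hΩ hr hrpos hu k a hK D hDtail
      set g : (Fin n → ℝ) → ℝ := fun x => r x ^ (-a) * wdList r p.2 u x with hg
      have hgmem : MemLp g 2 (volume.restrict Ω) := hK p.2 hplen
      have hbd : ∀ x ∈ Ω, |p.1 x| ≤ Mb Ω p.1 := Mb_spec (hpb [])
      set f1 : (Fin n → ℝ) → ℝ := fun x => r x ^ (-a) * (p.1 x * wdList r p.2 u x) with hf1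
      have hrca : ContinuousOn (fun x => r x ^ (-a)) Ω :=
        hr.continuousOn.rpow_const fun x hx => Or.inl (hrpos x hx).ne'
      have hf1c : ContinuousOn f1 Ω :=
        hrca.mul (hps.continuousOn.mul (contDiffOn_wdList hΩ hr hu p.2).continuousOn)
      have hf1m : AEStronglyMeasurable f1 (volume.restrict Ω) :=
        hf1c.aestronglyMeasurable hΩ.measurableSet
      have hae : ∀ᵐ x ∂(volume.restrict Ω), ‖f1 x‖ ≤ Mb Ω p.1 * ‖g x‖ := by
        refine Filter.eventually_of_mem (self_mem_ae_restrict hΩ.measurableSet)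
          fun x hx => ?_
        have h1 : ‖f1 x‖ = |p.1 x| * ‖g x‖ := by
          simp only [hf1, hg, Real.norm_eq_abs, abs_mul]
          ring
        rw [h1]
        exact mul_le_mul_of_nonneg_right (hbd x hx) (norm_nonneg _)
      have hf1mem : MemLp f1 2 (volume.restrict Ω) := hgmem.of_le_mul hf1m hae
      have hf1n : eLpNorm f1 2 (volume.restrict Ω)
          ≤ ENNReal.ofReal (Mb Ω p.1) * eLpNorm g 2 (volume.restrict Ω) :=
        eLpNorm_le_mul_eLpNorm_of_ae_le_mul hae 2
      have hgK : eLpNorm g 2 (volume.restrict Ω) ≤ Knorm Ω r k a u :=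
        le_iSup_of_le ⟨p.2, hplen⟩ le_rfl
      set f2 : (Fin n → ℝ) → ℝ := fun x => r x ^ (-a) * evalD r D u x with hf2
      have hsplit : (fun x => r x ^ (-a) * evalD r (p :: D) u x) = fun x => f1 x + f2 x := by
        funext x; rw [evalD_cons]; simp only [hf1, hf2]; ring
      rw [hsplit]
      constructor
      · exact hf1mem.add ihm
      · calc eLpNorm (fun x => f1 x + f2 x) 2 (volume.restrict Ω)
            ≤ eLpNorm f1 2 (volume.restrict Ω) + eLpNorm f2 2 (volume.restrict Ω) :=
              eLpNorm_add_le hf1mem.1 ihm.1 one_le_two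
          _ ≤ ENNReal.ofReal (Mb Ω p.1) * Knorm Ω r k a u + CD Ω D * Knorm Ω r k a u := by
              exact add_le_add (hf1n.trans (mul_le_mul_right hgK _)) ihn
          _ = CD Ω (p :: D) * Knorm Ω r k a u := by rw [CD_cons, add_mul]
end Core

/-- A weighted first-order operator `P = Σ_j a_j (r∂_j) + a₀` with strongly bounded
coefficients maps `K^k_a(Ω)` continuously to `K^{k−1}_a(Ω)`, leaving the weight
exponent `a` unchanged. -/
theorem weighted_first_order_operator_bounded
    (Ω : Set (Fin n → ℝ)) (hΩ : IsOpen Ω)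
    (r : (Fin n → ℝ) → ℝ) (hr : ContDiffOn ℝ (⊤ : ℕ∞) r Ω) (hrpos : ∀ x ∈ Ω, 0 < r x)
    (hrbd : ∀ (L : List (Fin n)) (j : Fin n),
      ∃ M : ℝ, ∀ x ∈ Ω, |wdList r L (pd j r) x| ≤ M)
    (aj : Fin n → (Fin n → ℝ) → ℝ) (a₀ : (Fin n → ℝ) → ℝ)
    (hajsmooth : ∀ j, ContDiffOn ℝ (⊤ : ℕ∞) (aj j) Ω) (ha₀smooth : ContDiffOn ℝ (⊤ : ℕ∞) a₀ Ω)
    (hajbd : ∀ (L : List (Fin n)) (j : Fin n),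
      ∃ M : ℝ, ∀ x ∈ Ω, |wdList r L (aj j) x| ≤ M)
    (ha₀bd : ∀ L : List (Fin n), ∃ M : ℝ, ∀ x ∈ Ω, |wdList r L a₀ x| ≤ M)
    (k : ℕ) (hk : 1 ≤ k) (a : ℝ) :
    ∃ C : ENNReal, C ≠ ⊤ ∧
      ∀ u : (Fin n → ℝ) → ℝ, ContDiffOn ℝ (⊤ : ℕ∞) u Ω → Kmem Ω r k a u →
        Kmem Ω r (k - 1) a (fun x => (∑ j, aj j x * (r x * pd j u x)) + a₀ x * u x) ∧
        Knorm Ω r (k - 1) a (fun x => (∑ j, aj j x * (r x * pd j u x)) + a₀ x * u x)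
          ≤ C * Knorm Ω r k a u := by
  classical
  have hfin : {L : List (Fin n) | L.length ≤ k - 1}.Finite := List.finite_length_le _ _
  refine ⟨∑ L ∈ hfin.toFinset, CD Ω (rep r aj a₀ L), ?_, ?_⟩
  · exact (ENNReal.sum_lt_top.mpr fun L _ => (CD_ne_top Ω _).lt_top).ne
  · intro u hu hK
    have key : ∀ L : List (Fin n), L.length ≤ k - 1 →
        MemLp (fun x => r x ^ (-a) *
            wdList r L (fun x => (∑ j, aj j x * (r x * pd j u x)) + a₀ x * u x) x) 2
          (volume.restrict Ω) ∧
        eLpNorm (fun x => r x ^ (-a) *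
            wdList r L (fun x => (∑ j, aj j x * (r x * pd j u x)) + a₀ x * u x) x) 2
          (volume.restrict Ω) ≤ CD Ω (rep r aj a₀ L) * Knorm Ω r k a u := by
      intro L hL
      have hlen : ∀ p ∈ rep r aj a₀ L, GoodC Ω r p.1 ∧ p.2.length ≤ k := by
        intro p hp
        obtain ⟨hg, hl⟩ := rep_props hΩ hr hajsmooth ha₀smooth hajbd ha₀bd L p hp
        exact ⟨hg, hl.trans (by omega)⟩
      obtain ⟨hm, hn⟩ := core_estimate hΩ hr hrpos hu k a hK (rep r aj a₀ L) hlen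
      have heq : (fun x => r x ^ (-a) *
            wdList r L (fun x => (∑ j, aj j x * (r x * pd j u x)) + a₀ x * u x) x)
          =ᵐ[volume.restrict Ω]
          (fun x => r x ^ (-a) * evalD r (rep r aj a₀ L) u x) := by
        refine Filter.eventually_of_mem (self_mem_ae_restrict hΩ.measurableSet)
          fun x hx => ?_
        exact congrArg (fun t => r x ^ (-a) * t)
          (rep_eval hΩ hr hajsmooth ha₀smooth hajbd ha₀bd hu L x hx)
      exact ⟨hm.ae_eq heq.symm, by rw [eLpNorm_congr_ae heq]; exact hn⟩
    refine ⟨fun L hL => (key L hL).1, ?_⟩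
    refine iSup_le fun L => ?_
    refine ((key L.1 L.2).2).trans (mul_le_mul_left ?_ _)
    exact Finset.single_le_sum (f := fun L => CD Ω (rep r aj a₀ L))
      (fun _ _ => zero_le) (hfin.mem_toFinset.mpr L.2)
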